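/- (Positive semidefiniteness of a bordered compound-symmetric matrix.) Let T ≥ 1 and let m, m_T, m_{T+1} ∈ ℝ. Let M be the symmetric (T+1)×(T+1) block matrix [[m·11ᵀ + (1/2)·I, m_T·1],[m_T·1ᵀ, m_{T+1}]], where 1 is the all-ones column vector of length T and I is the T×T identity. Then M is positive semidefinite if and only if: (i) m_{T+1} ≥ 0; (ii) T·m + 1/2 ≥ 0; and (iii) m_{T+1}·(T·m + 1/2) ≥ T·m_T². -/

import Mathlib

/-! With `S = ∑ xᵢ` and `Q = ∑ xᵢ²` over the first block of `x` and `y` its last coordinate, the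
quadratic form of `M` is `m S² + Q/2 + 2 mT S y + mT1 y²`. It is increasing in `Q`, and
`Q ≥ S²/T` by Cauchy–Schwarz with equality for constant blocks. So `M ⪰ 0` iff the form is
nonnegative on vectors with constant first block, i.e. iff the binary form
`T(Tm + 1/2) s² + 2 T mT s y + mT1 y²` is nonnegative, which is the criterion
`p ≥ 0, q ≥ 0, r² ≤ pq` for `p s² + 2 r s y + q y²`. -/

open Matrix Finset

theorem forall_binary_quadratic_nonneg_iff {p r q : ℝ} :
    (∀ s y : ℝ, 0 ≤ p * s ^ 2 + 2 * r * s * y + q * y ^ 2) ↔ 0 ≤ p ∧ 0 ≤ q ∧ r ^ 2 ≤ p * q := by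
  constructor
  · intro h
    have hp : 0 ≤ p := by simpa using h 1 0
    have hq : 0 ≤ q := by simpa using h 0 1
    have hdisc : discrim q (2 * r) p ≤ 0 := discrim_le_zero fun y => by nlinarith [h 1 y]
    refine ⟨hp, hq, ?_⟩
    rw [discrim] at hdisc
    nlinarith
  · rintro ⟨hp, hq, hrpq⟩ s y
    rcases hp.eq_or_lt with rfl | hp
    · have hr : r = 0 := by nlinarith
      subst hr
      nlinarith [sq_nonneg y]
    · have : 0 ≤ p * (p * s ^ 2 + 2 * r * s * y + q * y ^ 2) := by
        nlinarith [sq_nonneg (p * s + r * y), mul_nonneg (sub_nonneg.2 hrpq) (sq_nonneg y)]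
      exact nonneg_of_mul_nonneg_right this hp

variable {ι : Type*} [DecidableEq ι]

noncomputable def borderedCompoundSymmetric (m mT mT1 : ℝ) : Matrix (ι ⊕ Unit) (ι ⊕ Unit) ℝ :=
  fromBlocks (of (fun _ _ => m) + (1 / 2 : ℝ) • 1) (of fun _ _ => mT) (of fun _ _ => mT)
    (of fun _ _ => mT1)

variable (m mT mT1 : ℝ)

theorem isHermitian_borderedCompoundSymmetric :
    (borderedCompoundSymmetric m mT mT1 : Matrix (ι ⊕ Unit) (ι ⊕ Unit) ℝ).IsHermitian := by
  ext (i | i) (j | j) <;>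
    simp [borderedCompoundSymmetric, conjTranspose_apply, one_apply, eq_comm]

variable [Fintype ι]

theorem dotProduct_borderedCompoundSymmetric_mulVec (x : ι ⊕ Unit → ℝ) :
    star x ⬝ᵥ (borderedCompoundSymmetric m mT mT1 *ᵥ x) =
      m * (∑ i, x (.inl i)) ^ 2 + (∑ i, x (.inl i) ^ 2) / 2
        + 2 * mT * (∑ i, x (.inl i)) * x (.inr ()) + mT1 * x (.inr ()) ^ 2 := by
  have hinl : ∀ i, (borderedCompoundSymmetric m mT mT1 *ᵥ x) (.inl i) =
      m * ∑ j, x (.inl j) + x (.inl i) / 2 + mT * x (.inr ()) := by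
    intro i
    simp [borderedCompoundSymmetric, mulVec, dotProduct, Fintype.sum_sum_type, add_mul,
      sum_add_distrib, one_apply, mul_sum, div_eq_inv_mul]
  have hinr : (borderedCompoundSymmetric m mT mT1 *ᵥ x) (.inr ()) =
      mT * ∑ j, x (.inl j) + mT1 * x (.inr ()) := by
    simp [borderedCompoundSymmetric, mulVec, dotProduct, Fintype.sum_sum_type, mul_sum]
  simp only [dotProduct, Fintype.sum_sum_type, hinl, hinr, Pi.star_apply, star_trivial,
    Fintype.univ_unit, sum_singleton]
  simp only [mul_add, sum_add_distrib, ← sum_mul, mul_div_assoc', ← sq, ← sum_div]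
  ring

variable [Nonempty ι]

theorem posSemidef_borderedCompoundSymmetric_iff_forall_binary :
    (borderedCompoundSymmetric m mT mT1 : Matrix (ι ⊕ Unit) (ι ⊕ Unit) ℝ).PosSemidef ↔
      ∀ s y : ℝ, 0 ≤ (Fintype.card ι * (Fintype.card ι * m + 1 / 2)) * s ^ 2
        + 2 * (Fintype.card ι * mT) * s * y + mT1 * y ^ 2 := by
  have hT : (0 : ℝ) < Fintype.card ι := by exact_mod_cast Fintype.card_pos
  simp only [posSemidef_iff_dotProduct_mulVec, isHermitian_borderedCompoundSymmetric, true_and,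
    dotProduct_borderedCompoundSymmetric_mulVec]
  constructor
  · intro h s y
    have h1 := h (Sum.elim (fun _ => s) fun _ => y)
    simp only [Sum.elim_inl, Sum.elim_inr, sum_const, card_univ, nsmul_eq_mul] at h1
    linarith
  · intro h x
    set S := ∑ i, x (.inl i)
    set Q := ∑ i, x (.inl i) ^ 2
    set y := x (.inr ())
    have hCS : S ^ 2 ≤ Fintype.card ι * Q := by
      simpa using sq_sum_le_card_mul_sum_sq (s := univ) (f := fun i => x (.inl i))
    calc 0 ≤ _ := h (S / Fintype.card ι) y
      _ = m * S ^ 2 + S ^ 2 / Fintype.card ι / 2 + 2 * mT * S * y + mT1 * y ^ 2 := by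
        field_simp
      _ ≤ _ := by
        gcongr
        exact (div_le_iff₀' hT).2 hCS

theorem posSemidef_borderedCompoundSymmetric_iff :
    (borderedCompoundSymmetric m mT mT1 : Matrix (ι ⊕ Unit) (ι ⊕ Unit) ℝ).PosSemidef ↔
      0 ≤ mT1 ∧ 0 ≤ (Fintype.card ι : ℝ) * m + 1 / 2 ∧
        (Fintype.card ι : ℝ) * mT ^ 2 ≤ mT1 * ((Fintype.card ι : ℝ) * m + 1 / 2) := by
  have hT : (0 : ℝ) < Fintype.card ι := by exact_mod_cast Fintype.card_pos
  rw [posSemidef_borderedCompoundSymmetric_iff_forall_binary, forall_binary_quadratic_nonneg_iff,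
    mul_nonneg_iff_of_pos_left hT, mul_pow, sq (Fintype.card ι : ℝ), mul_assoc, mul_assoc,
    mul_le_mul_iff_right₀ hT, mul_comm _ mT1]
  tauto

theorem bordered_compound_symmetric_posSemidef_iff (T : ℕ) (hT : 1 ≤ T)
    (m mT mT1 : ℝ) :
    (Matrix.fromBlocks
        ((Matrix.of fun (_ _ : Fin T) => m) + (1 / 2 : ℝ) • (1 : Matrix (Fin T) (Fin T) ℝ))
        (Matrix.of fun (_ : Fin T) (_ : Unit) => mT)
        (Matrix.of fun (_ : Unit) (_ : Fin T) => mT)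
        (Matrix.of fun (_ : Unit) (_ : Unit) => mT1)).PosSemidef ↔
      (0 ≤ mT1 ∧ 0 ≤ (T : ℝ) * m + 1 / 2 ∧
        (T : ℝ) * mT ^ 2 ≤ mT1 * ((T : ℝ) * m + 1 / 2)) := by
  have : Nonempty (Fin T) := Fin.pos_iff_nonempty.mp hT
  have h := posSemidef_borderedCompoundSymmetric_iff (ι := Fin T) m mT mT1
  rwa [Fintype.card_fin] at h
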